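/- arXiv:2601.23073 — 2 statements merged into one kernel-verified Lean document; each statement's English description precedes it below -/
import Mathlib

section
/- For any permutations ρ, π, φ of {1,…,n}, the piecewise linear path that goes in a straight line from p(ρ, φ) to p(π, φ) and then in a straight line from p(π, φ) to p(id, φ) lies in OC_n and is homotopic, relative to endpoints and through paths in OC_n, to the straight-line path from p(ρ, φ) to p(id, φ). -/
/-- The ordered configuration space of `n` points in `ℂ`. -/
def OC (n : ℕ) : Set (Fin n → ℂ) := {z | Function.Injective z}

/-- The permutation point `p(π, φ)`: `k`-th coordinate is `π(k) + φ(k)·i`,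
where `π(k), φ(k)` take values in `{1, …, n}`. -/
noncomputable def permPoint {n : ℕ} (π φ : Equiv.Perm (Fin n)) : Fin n → ℂ :=
  fun k => (((π k : ℕ) + 1 : ℝ) : ℂ) + (((φ k : ℕ) + 1 : ℝ) : ℂ) * Complex.I

/-- Straight-line segment from `a` to `b`, parametrized on `[0,1]`. -/
noncomputable def seg {n : ℕ} (a b : Fin n → ℂ) (t : ℝ) : Fin n → ℂ :=
  fun k => ((1 - t : ℝ) : ℂ) * a k + (t : ℂ) * b k

/-- The piecewise linear path `a → b → c`, parametrized on `[0,1]`. -/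
noncomputable def pwPath {n : ℕ} (a b c : Fin n → ℂ) (t : ℝ) : Fin n → ℂ :=
  if t ≤ 1/2 then seg a b (2 * t) else seg b c (2 * t - 1)

/-!
All permutation points with the same `φ` have the same imaginary parts `φ(k) + 1`, which are
pairwise distinct. Affine combinations keep these imaginary parts, so both paths and the
straight-line homotopy between them stay in the affine subspace of tuples with those imaginary
parts, and that subspace lies inside `OC n`.
-/

open Complex

section Segment

variable {n : ℕ}

@[simp]
lemma seg_zero (a b : Fin n → ℂ) : seg a b 0 = a := by
  ext k; simp [seg]

@[simp]
lemma seg_one (a b : Fin n → ℂ) : seg a b 1 = b := by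
  ext k; simp [seg]

@[simp]
lemma seg_self (a : Fin n → ℂ) (t : ℝ) : seg a a t = a := by
  ext k; simp only [seg]; push_cast; ring

lemma pwPath_zero (a b c : Fin n → ℂ) : pwPath a b c 0 = a := by
  simp [pwPath]

lemma pwPath_one (a b c : Fin n → ℂ) : pwPath a b c 1 = c := by
  rw [pwPath, if_neg (by norm_num)]
  norm_num

lemma im_comp_seg {a b : Fin n → ℂ} (h : im ∘ a = im ∘ b) (t : ℝ) :
    im ∘ seg a b t = im ∘ a := by
  ext k
  have hk : (a k).im = (b k).im := congrFun h k
  simp only [Function.comp_apply, seg, add_im, im_ofReal_mul, hk]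
  ring

lemma im_comp_pwPath {a b c : Fin n → ℂ} (hab : im ∘ a = im ∘ b) (hbc : im ∘ b = im ∘ c)
    (t : ℝ) : im ∘ pwPath a b c t = im ∘ a := by
  unfold pwPath
  split
  · exact im_comp_seg hab _
  · exact (im_comp_seg hbc _).trans hab.symm

lemma Continuous.seg {X : Type*} [TopologicalSpace X] {f g : X → Fin n → ℂ} {r : X → ℝ}
    (hf : Continuous f) (hg : Continuous g) (hr : Continuous r) :
    Continuous fun x => seg (f x) (g x) (r x) := by
  unfold _root_.seg
  fun_prop

lemma continuous_pwPath (a b c : Fin n → ℂ) : Continuous (pwPath a b c) := by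
  refine Continuous.if_le ?_ ?_ continuous_id continuous_const ?_
  · exact continuous_const.seg continuous_const (by fun_prop)
  · exact continuous_const.seg continuous_const (by fun_prop)
  · rintro t rfl
    norm_num

end Segment

lemma mem_OC_of_injective_im {n : ℕ} {z : Fin n → ℂ} (h : Function.Injective (im ∘ z)) :
    z ∈ OC n :=
  h.of_comp

lemma im_comp_permPoint {n : ℕ} (π φ : Equiv.Perm (Fin n)) :
    im ∘ permPoint π φ = fun k => ((φ k : ℕ) : ℝ) + 1 := by
  ext k; simp [permPoint]

lemma injective_im_comp_permPoint {n : ℕ} (π φ : Equiv.Perm (Fin n)) :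
    Function.Injective (im ∘ permPoint π φ) := by
  rw [im_comp_permPoint]
  intro k j h
  exact φ.injective (Fin.ext (by simpa using h))

theorem pw_homotopic_straight_line {n : ℕ} (ρ π φ : Equiv.Perm (Fin n)) :
    (∀ t ∈ Set.Icc (0:ℝ) 1,
      pwPath (permPoint ρ φ) (permPoint π φ) (permPoint 1 φ) t ∈ OC n) ∧
    (∀ t ∈ Set.Icc (0:ℝ) 1, seg (permPoint ρ φ) (permPoint 1 φ) t ∈ OC n) ∧
    ∃ H : ℝ → ℝ → (Fin n → ℂ),
      ContinuousOn (fun p : ℝ × ℝ => H p.1 p.2)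
        (Set.Icc (0:ℝ) 1 ×ˢ Set.Icc (0:ℝ) 1) ∧
      (∀ s ∈ Set.Icc (0:ℝ) 1, ∀ t ∈ Set.Icc (0:ℝ) 1, H s t ∈ OC n) ∧
      (∀ t ∈ Set.Icc (0:ℝ) 1,
        H 0 t = pwPath (permPoint ρ φ) (permPoint π φ) (permPoint 1 φ) t) ∧
      (∀ t ∈ Set.Icc (0:ℝ) 1, H 1 t = seg (permPoint ρ φ) (permPoint 1 φ) t) ∧
      (∀ s ∈ Set.Icc (0:ℝ) 1,
        H s 0 = permPoint ρ φ ∧ H s 1 = permPoint 1 φ) := by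
  set a := permPoint ρ φ
  set b := permPoint π φ
  set c := permPoint 1 φ
  have hab : im ∘ a = im ∘ b := by simp only [a, b, im_comp_permPoint]
  have hbc : im ∘ b = im ∘ c := by simp only [b, c, im_comp_permPoint]
  have hpw (t : ℝ) : im ∘ pwPath a b c t = im ∘ a := im_comp_pwPath hab hbc t
  have hseg (t : ℝ) : im ∘ seg a c t = im ∘ a := im_comp_seg (hab.trans hbc) t
  have ha : Function.Injective (im ∘ a) := injective_im_comp_permPoint ρ φ
  refine ⟨fun t _ => mem_OC_of_injective_im ((hpw t).symm ▸ ha),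
    fun t _ => mem_OC_of_injective_im ((hseg t).symm ▸ ha),
    fun s t => seg (pwPath a b c t) (seg a c t) s, ?_, ?_, ?_, ?_, ?_⟩
  · exact Continuous.continuousOn <|
      ((continuous_pwPath a b c).comp continuous_snd).seg
        ((continuous_const.seg continuous_const continuous_id).comp continuous_snd) continuous_fst
  · intro s _ t _
    refine mem_OC_of_injective_im ?_
    rw [im_comp_seg ((hpw t).trans (hseg t).symm), hpw]
    exact ha
  · intro t _; exact seg_zero _ _
  · intro t _; exact seg_one _ _
  · intro s _
    simp [pwPath_zero, pwPath_one]
end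

section
/- Let F, G : [0,1] → OC_n be continuous paths that are both covered by a common finite sequence of arrangement cells (A_1,…,A_r), realized by a common partition 0 = t_0 ≤ t_1 ≤ … ≤ t_r = 1 (so F([t_{i-1},t_i]) ⊆ A_i and G([t_{i-1},t_i]) ⊆ A_i for every i). Then the straight-line homotopy H(s,t) = (1−s)·F(t) + s·G(t) takes values in OC_n for all s, t ∈ [0,1]. -/
/-- An arrangement on `n` points: a pair of strict partial orders on `Fin n`
such that any two distinct indices are comparable in at least one of them. -/
def IsArrangement {n : ℕ} (rRe rIm : Fin n → Fin n → Prop) : Prop :=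
  (∀ i, ¬ rRe i i) ∧ (∀ i j k, rRe i j → rRe j k → rRe i k) ∧
  (∀ i, ¬ rIm i i) ∧ (∀ i j k, rIm i j → rIm j k → rIm i k) ∧
  (∀ i j, i ≠ j → rRe i j ∨ rRe j i ∨ rIm i j ∨ rIm j i)

/-- The arrangement cell attached to a pair of relations. -/
def cell {n : ℕ} (rRe rIm : Fin n → Fin n → Prop) : Set (Fin n → ℂ) :=
  {z | (∀ i j, rRe i j → (z i).re < (z j).re) ∧
       (∀ i j, rIm i j → (z i).im < (z j).im)}

/-! Every arrangement cell is an intersection of open half-spaces of `ℂⁿ`, hence convex; at each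
time `u`, both `F u` and `G u` lie in the cell of a partition interval containing `u`, so the
whole segment between them does too. A point of a cell has distinct coordinates, because any two
indices are strictly ordered by the real or the imaginary parts. -/

theorem Fin.exists_mem_Icc_castSucc_succ {α : Type*} [LinearOrder α] :
    ∀ {r : ℕ} (t : Fin (r + 2) → α) {u : α}, u ∈ Set.Icc (t 0) (t (Fin.last (r + 1))) →
      ∃ i : Fin (r + 1), u ∈ Set.Icc (t i.castSucc) (t i.succ)
  | 0, _, _, hu => ⟨0, hu⟩
  | r + 1, t, u, ⟨h0, hlast⟩ => by
    by_cases hu : u ≤ t (Fin.last (r + 1)).castSucc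
    · obtain ⟨i, hi⟩ := exists_mem_Icc_castSucc_succ (t ∘ Fin.castSucc) ⟨h0, hu⟩
      exact ⟨i.castSucc, hi⟩
    · exact ⟨Fin.last (r + 1), le_of_not_ge hu, hlast⟩

section Cell

variable {n : ℕ} {rRe rIm : Fin n → Fin n → Prop}

theorem IsArrangement.cell_subset_OC (h : IsArrangement rRe rIm) : cell rRe rIm ⊆ OC n := by
  rintro z ⟨hre, him⟩ i j hij
  by_contra hne
  rcases h.2.2.2.2 i j hne with hij' | hji' | hij' | hji'
  · exact (hre i j hij').ne (congrArg Complex.re hij)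
  · exact (hre j i hji').ne (congrArg Complex.re hij.symm)
  · exact (him i j hij').ne (congrArg Complex.im hij)
  · exact (him j i hji').ne (congrArg Complex.im hij.symm)

theorem convex_setOf_re_lt_re (i j : Fin n) :
    Convex ℝ {z : Fin n → ℂ | (z i).re < (z j).re} := by
  simpa only [sub_neg] using convex_halfSpace_lt (f := fun z : Fin n → ℂ => (z i).re - (z j).re)
    ⟨fun x y => by simp only [Pi.add_apply, Complex.add_re]; ring,
     fun c x => by simp only [Pi.smul_apply, Complex.smul_re, smul_eq_mul]; ring⟩ 0

theorem convex_setOf_im_lt_im (i j : Fin n) :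
    Convex ℝ {z : Fin n → ℂ | (z i).im < (z j).im} := by
  simpa only [sub_neg] using convex_halfSpace_lt (f := fun z : Fin n → ℂ => (z i).im - (z j).im)
    ⟨fun x y => by simp only [Pi.add_apply, Complex.add_im]; ring,
     fun c x => by simp only [Pi.smul_apply, Complex.smul_im, smul_eq_mul]; ring⟩ 0

theorem cell_eq_iInter :
    cell rRe rIm = (⋂ (i) (j) (_ : rRe i j), {z | (z i).re < (z j).re}) ∩
      ⋂ (i) (j) (_ : rIm i j), {z | (z i).im < (z j).im} := by
  ext z
  simp only [cell, Set.mem_ofPred_eq, Set.mem_inter_iff, Set.mem_iInter]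

theorem convex_cell : Convex ℝ (cell rRe rIm) := by
  rw [cell_eq_iInter]
  exact (convex_iInter₂ fun i j => convex_iInter fun _ => convex_setOf_re_lt_re i j).inter
    (convex_iInter₂ fun i j => convex_iInter fun _ => convex_setOf_im_lt_im i j)

end Cell

theorem straight_line_homotopy_in_OC_general {n r : ℕ}
    (rRe rIm : Fin r → Fin n → Fin n → Prop)
    (harr : ∀ i, IsArrangement (rRe i) (rIm i))
    (F G : ℝ → (Fin n → ℂ))
    (t : Fin (r + 1) → ℝ)
    (h0 : t 0 = 0) (h1 : t (Fin.last r) = 1)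
    (hF : ∀ i : Fin r, F '' Set.Icc (t i.castSucc) (t i.succ) ⊆ cell (rRe i) (rIm i))
    (hG : ∀ i : Fin r, G '' Set.Icc (t i.castSucc) (t i.succ) ⊆ cell (rRe i) (rIm i)) :
    ∀ s ∈ Set.Icc (0:ℝ) 1, ∀ u ∈ Set.Icc (0:ℝ) 1,
      (fun k => ((1 - s : ℝ) : ℂ) * F u k + (s : ℂ) * G u k) ∈ OC n := by
  intro s ⟨hs0, hs1⟩ u hu
  obtain _ | r := r
  · exact absurd (h0.symm.trans h1) zero_ne_one
  obtain ⟨i, hi⟩ := Fin.exists_mem_Icc_castSucc_succ t (by rwa [h0, h1])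
  have hcomb : (1 - s) • F u + s • G u ∈ cell (rRe i) (rIm i) :=
    convex_cell (hF i ⟨u, hi, rfl⟩) (hG i ⟨u, hi, rfl⟩) (sub_nonneg.2 hs1) hs0 (sub_add_cancel 1 s)
  exact (harr i).cell_subset_OC hcomb

theorem straight_line_homotopy_in_OC {n r : ℕ}
    (rRe rIm : Fin r → Fin n → Fin n → Prop)
    (harr : ∀ i, IsArrangement (rRe i) (rIm i))
    (F G : ℝ → (Fin n → ℂ))
    (hFc : ContinuousOn F (Set.Icc 0 1)) (hGc : ContinuousOn G (Set.Icc 0 1))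
    (hFoc : ∀ u ∈ Set.Icc (0:ℝ) 1, F u ∈ OC n)
    (hGoc : ∀ u ∈ Set.Icc (0:ℝ) 1, G u ∈ OC n)
    (t : Fin (r + 1) → ℝ) (hmono : Monotone t)
    (h0 : t 0 = 0) (h1 : t (Fin.last r) = 1)
    (hF : ∀ i : Fin r, F '' Set.Icc (t i.castSucc) (t i.succ) ⊆ cell (rRe i) (rIm i))
    (hG : ∀ i : Fin r, G '' Set.Icc (t i.castSucc) (t i.succ) ⊆ cell (rRe i) (rIm i)) :
    ∀ s ∈ Set.Icc (0:ℝ) 1, ∀ u ∈ Set.Icc (0:ℝ) 1,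
      (fun k => ((1 - s : ℝ) : ℂ) * F u k + (s : ℂ) * G u k) ∈ OC n :=
  straight_line_homotopy_in_OC_general rRe rIm harr F G t h0 h1 hF hG
end
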